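/- Let U be an undirected graph and α a total order on its vertices. Orient each edge {A,B} of U as A→B if A < B in α. If U is chordal, then there exists a total order α for which the resulting orientation has no unshielded collider. -/

import Mathlib

/-- An undirected graph is chordal: every cycle of length at least 4 has a chord. -/
def ChordalGraph {V : Type*} (G : SimpleGraph V) : Prop :=
  ∀ ⦃v : V⦄ (c : G.Walk v v), c.IsCycle → 4 ≤ c.length →
    ∃ a b, a ∈ c.support ∧ b ∈ c.support ∧ G.Adj a b ∧ s(a, b) ∉ c.edges

/-- The orientation of the edges of U induced by a strict total order r:
edge {A,B} is directed A→B iff r A B. -/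
def OrderOrientation {V : Type*} (U : SimpleGraph V) (r : V → V → Prop) :
    V → V → Prop :=
  fun a b => U.Adj a b ∧ r a b

/-- D has an unshielded collider a → b ← c with a, c non-adjacent in U. -/
def HasUnshieldedCollider {V : Type*} (U : SimpleGraph V) (D : V → V → Prop) : Prop :=
  ∃ a b c, D a b ∧ D c b ∧ a ≠ c ∧ ¬ U.Adj a c

/-!
Finite case: a perfect elimination ordering. It suffices that every nonempty finite vertex set `s`
contains a vertex whose neighbours in `s` form a clique; ranking it last and recursing on the rest
makes the earlier neighbours of every vertex a clique, so no collider is unshielded. Such a vertex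
exists by Dirac's argument, strengthened so that it can be found outside any prescribed clique `K`
that does not contain `s`. If `s` is not a clique, take `a ∈ s` adjacent to the rest of `K ∩ s`
but not to some `b ∈ s`, the component `C ∋ b` of `s` minus the closed neighbourhood of `a`, and
the set `S` of neighbours of `a` adjacent to `C`. Two non-adjacent vertices of `S` would close,
through `a` and through a chordless path across `C`, a chordless cycle of length at least four, so
`S` is a clique; induction on `C ∪ S` away from `S` gives a vertex of `C`, which does the job in
`s` as well.

Infinite case: compactness. The orders obtained on all finite vertex sets are glued along an
ultrafilter on finsets refining `atTop`.
-/

namespace SimpleGraph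

variable {V : Type*} {G : SimpleGraph V}

namespace Walk

theorem exists_shorter_of_isChord {u v x y : V} (p : G.Walk u v) (h : p.IsChord s(x, y)) :
    ∃ q : G.Walk u v, q.length < p.length ∧ ∀ z ∈ q.support, z ∈ p.support := by
  classical
  obtain ⟨hxy, he, hx, hy⟩ := isChord_sym2Mk.mp h
  clear h
  induction p with
  | nil =>
    simp only [support_nil, List.mem_singleton] at hx hy
    exact absurd (hx ▸ hy ▸ hxy) G.irrefl
  | @cons u u' v h q ih =>
    by_cases hq : x ∈ q.support ∧ y ∈ q.support
    · obtain ⟨r, hr, hrq⟩ := ih (fun h' => he (by simp [h'])) hq.1 hq.2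
      exact ⟨cons h r, by simpa using hr, fun z hz => by
        rcases List.mem_cons.mp hz with rfl | hz
        · simp
        · exact List.mem_cons_of_mem _ (hrq z hz)⟩
    · -- the chord joins `u` to a vertex `z ≠ u'` of `q`: jump straight to `z`
      obtain ⟨z, hzq, huz, he'⟩ : ∃ z ∈ q.support, G.Adj u z ∧ s(u, z) ∉ (cons h q).edges := by
        simp only [support_cons, List.mem_cons] at hx hy
        rcases hx with rfl | hx
        · exact ⟨y, hy.resolve_left hxy.ne', hxy, he⟩
        · obtain rfl := hy.resolve_right (fun hy => hq ⟨hx, hy⟩)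
          exact ⟨x, hx, hxy.symm, by rwa [Sym2.eq_swap]⟩
      have hzu' : z ≠ u' := by rintro rfl; simp at he'
      refine ⟨cons huz (q.dropUntil z hzq), ?_, fun w hw => ?_⟩
      · simpa using length_dropUntil_lt_length hzq hzu'
      · rcases List.mem_cons.mp hw with rfl | hw
        · simp
        · exact List.mem_cons_of_mem _ (q.support_dropUntil_subset_support hzq hw)

theorem exists_isPath_isChordless {Z : Set V} {u v : V} (p : G.Walk u v)
    (hp : ∀ z ∈ p.support, z ∈ Z) :
    ∃ q : G.Walk u v, q.IsPath ∧ q.IsChordless ∧ ∀ z ∈ q.support, z ∈ Z := by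
  classical
  induction h : p.length using Nat.strong_induction_on generalizing p with
  | _ n ih =>
    have hbyp : ∀ z ∈ p.bypass.support, z ∈ Z :=
      fun z hz => hp z (p.support_bypass_subset_support hz)
    by_cases hc : p.bypass.IsChordless
    · exact ⟨p.bypass, p.bypass_isPath, hc, hbyp⟩
    · simp only [isChordless_iff_forall_mem_edges, not_forall] at hc
      obtain ⟨x, y, hx, hy, hxy, he⟩ := hc
      obtain ⟨r, hr, hrp⟩ :=
        p.bypass.exists_shorter_of_isChord (isChord_sym2Mk.mpr ⟨hxy, he, hx, hy⟩)
      exact ih r.length (h ▸ hr.trans_le p.length_bypass_le_length) r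
        (fun z hz => hbyp z (hrp z hz)) rfl

end Walk

def IsSimplicialIn (G : SimpleGraph V) (s : Set V) (v : V) : Prop :=
  G.IsClique (G.neighborSet v ∩ s)

theorem IsClique.exists_not_adj_and_forall_adj {s K : Set V} (hK : G.IsClique K)
    (hs : ¬ G.IsClique s) :
    ∃ a ∈ s, (∃ b ∈ s, b ≠ a ∧ ¬ G.Adj a b) ∧ ∀ k ∈ K ∩ s, k ≠ a → G.Adj a k := by
  by_cases h : ∃ a ∈ K ∩ s, ∃ b ∈ s, b ≠ a ∧ ¬ G.Adj a b
  · obtain ⟨a, ⟨haK, has⟩, hb⟩ := h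
    exact ⟨a, has, hb, fun k ⟨hkK, _⟩ hka => hK haK hkK (Ne.symm hka)⟩
  · obtain ⟨a, has, b, hbs, hab, hnab⟩ : ∃ a ∈ s, ∃ b ∈ s, a ≠ b ∧ ¬ G.Adj a b := by
      simpa [IsClique, Set.Pairwise] using hs
    push Not at h
    exact ⟨a, has, ⟨b, hbs, hab.symm, hnab⟩, fun k hk hka => (h k hk a has (Ne.symm hka)).symm⟩

end SimpleGraph

section Chordal

open SimpleGraph Walk

variable {V : Type*} {U : SimpleGraph V}

theorem ChordalGraph.not_isChordless (hU : ChordalGraph U) {v : V} (c : U.Walk v v)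
    (hc : c.IsCycle) (hlen : 4 ≤ c.length) : ¬ c.IsChordless := by
  obtain ⟨a, b, ha, hb, hab, he⟩ := hU c hc hlen
  exact fun h => he (h.mem_edges ha hb hab)

theorem ChordalGraph.length_le_one_of_isChordless (hU : ChordalGraph U) {a x y : V}
    (p : U.Walk x y) (hp : p.IsPath) (hpc : p.IsChordless) (ha : a ∉ p.support)
    (hax : U.Adj a x) (hay : U.Adj a y) (hnbr : ∀ z ∈ p.support, U.Adj a z → z = x ∨ z = y) :
    p.length ≤ 1 := by
  by_contra! hlen
  have hxy : x ≠ y := by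
    rintro rfl
    simp [(isPath_iff_nil.mp hp).eq_nil] at hlen
  set c := cons hax (p.concat hay.symm)
  have hcyc : c.IsCycle := by
    refine (cons_isCycle_iff _ hax).mpr ⟨hp.concat ha hay.symm, ?_⟩
    simp only [edges_concat, List.concat_eq_append, List.mem_append, List.mem_singleton]
    rintro (he | he)
    · exact ha (p.fst_mem_support_of_mem_edges he)
    · simp [hxy, hay.ne] at he
  have hsupp : ∀ z ∈ c.support, z = a ∨ z ∈ p.support := by
    simp only [c, support_cons, support_concat, List.mem_cons, List.mem_append,
      List.not_mem_nil, or_false]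
    tauto
  have hedges : ∀ z ∈ p.support, U.Adj a z → s(a, z) ∈ c.edges := by
    intro z hz haz
    rcases hnbr z hz haz with rfl | rfl <;> simp [c, Sym2.eq_swap]
  refine hU.not_isChordless c hcyc (by simp [c]; omega) (isChordless_iff_forall_mem_edges.mpr ?_)
  intro u v hu hv huv
  rcases hsupp u hu with rfl | hup <;> rcases hsupp v hv with rfl | hvp
  · exact absurd huv U.irrefl
  · exact hedges v hvp huv
  · exact Sym2.eq_swap ▸ hedges u hup huv.symm
  · simp [c, hpc.mem_edges hup hvp huv]

theorem ChordalGraph.adj_of_walk_avoiding (hU : ChordalGraph U) {Z : Set V} {a x y c₁ c₂ : V}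
    (hZ : ∀ z ∈ Z, z ≠ a ∧ ¬ U.Adj a z) (w : U.Walk c₁ c₂) (hw : ∀ z ∈ w.support, z ∈ Z)
    (hax : U.Adj a x) (hay : U.Adj a y) (hxc : U.Adj x c₁) (hyc : U.Adj c₂ y) (hxy : x ≠ y) :
    U.Adj x y := by
  obtain ⟨p, hp, hpc, hpZ⟩ := (cons hxc (w.concat hyc)).exists_isPath_isChordless
    (Z := insert x (insert y Z)) (by
      simp only [support_cons, support_concat, List.mem_cons, List.mem_append, List.not_mem_nil,
        or_false, Set.mem_insert_iff]
      rintro z (rfl | hz | rfl) <;> simp_all)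
  have hnbr : ∀ z ∈ p.support, U.Adj a z → z = x ∨ z = y := fun z hz haz => by
    rcases hpZ z hz with h | h | h
    exacts [Or.inl h, Or.inr h, absurd haz (hZ z h).2]
  have ha : a ∉ p.support := fun h => by
    rcases hpZ a h with rfl | rfl | h
    exacts [U.irrefl hax, U.irrefl hay, (hZ a h).1 rfl]
  rcases Nat.le_one_iff_eq_zero_or_eq_one.mp
      (hU.length_le_one_of_isChordless p hp hpc ha hax hay hnbr) with h | h
  · exact absurd (eq_of_length_eq_zero h) hxy
  · exact adj_of_length_eq_one h

theorem ChordalGraph.isClique_setOf_adj_of_reachable (hU : ChordalGraph U) {Z : Set V}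
    {a b : V} (hZ : ∀ z ∈ Z, z ≠ a ∧ ¬ U.Adj a z) :
    U.IsClique {x | U.Adj a x ∧
      ∃ c, (∃ w : U.Walk b c, ∀ z ∈ w.support, z ∈ Z) ∧ U.Adj x c} := by
  rintro x ⟨hax, c₁, ⟨w₁, hw₁⟩, hxc⟩ y ⟨hay, c₂, ⟨w₂, hw₂⟩, hyc⟩ hxy
  refine hU.adj_of_walk_avoiding hZ (w₁.reverse.append w₂) ?_ hax hay hxc hyc.symm hxy
  simp only [support_append, support_reverse, List.mem_append, List.mem_reverse]
  rintro z (hz | hz)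
  exacts [hw₁ z hz, hw₂ z (List.mem_of_mem_tail hz)]

theorem ChordalGraph.exists_isSimplicialIn_notMem (hU : ChordalGraph U) (s : Finset V)
    {K : Set V} (hK : U.IsClique K) (hsK : ∃ v ∈ s, v ∉ K) :
    ∃ v ∈ s, v ∉ K ∧ U.IsSimplicialIn s v := by
  classical
  induction s using Finset.strongInduction generalizing K with
  | H s ih =>
  by_cases hs : U.IsClique (s : Set V)
  · obtain ⟨v, hvs, hvK⟩ := hsK
    exact ⟨v, hvs, hvK, hs.subset Set.inter_subset_right⟩
  obtain ⟨a, has, ⟨b, hbs, hba, hab⟩, hKa⟩ := hK.exists_not_adj_and_forall_adj hs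
  set Z : Set V := {z | z ∈ s ∧ z ≠ a ∧ ¬ U.Adj a z}
  set C : Set V := {c | ∃ w : U.Walk b c, ∀ z ∈ w.support, z ∈ Z}
  set S : Set V := {x | U.Adj a x ∧ ∃ c ∈ C, U.Adj x c}
  have hCZ : C ⊆ Z := fun c ⟨w, hw⟩ => hw c w.end_mem_support
  have hbC : b ∈ C := ⟨nil, by simpa [Z] using ⟨hbs, hba, hab⟩⟩
  have hS : U.IsClique S := hU.isClique_setOf_adj_of_reachable (Z := Z) fun z hz => hz.2
  have haCS : ¬ (a ∈ C ∨ a ∈ S) := by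
    rintro (haC | ⟨haa, -⟩)
    exacts [(hCZ haC).2.1 rfl, U.irrefl haa]
  set t := s.filter (fun v => v ∈ C ∨ v ∈ S)
  obtain ⟨v, hvt, hvS, hv⟩ := ih t (Finset.filter_ssubset.mpr ⟨a, has, haCS⟩) hS
    ⟨b, Finset.mem_filter.mpr ⟨hbs, Or.inl hbC⟩, fun h => hab h.1⟩
  have hvC : v ∈ C := (Finset.mem_filter.mp hvt).2.resolve_right hvS
  obtain ⟨hvs, hva, hav⟩ := hCZ hvC
  refine ⟨v, hvs, fun hvK => hav (hKa v ⟨hvK, hvs⟩ hva), hv.subset ?_⟩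
  rintro u ⟨hvu : U.Adj v u, hus⟩
  refine ⟨hvu, Finset.mem_filter.mpr ⟨hus, ?_⟩⟩
  by_cases hau : U.Adj a u
  · exact Or.inr ⟨hau, v, hvC, hvu.symm⟩
  · obtain ⟨w, hw⟩ := hvC
    refine Or.inl ⟨w.concat hvu, fun z hz => ?_⟩
    rw [support_concat, List.mem_append, List.mem_singleton] at hz
    rcases hz with hz | rfl
    · exact hw z hz
    · exact ⟨hus, by rintro rfl; exact hav hvu.symm, hau⟩

theorem ChordalGraph.exists_perfectEliminationRank (hU : ChordalGraph U) (s : Finset V) :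
    ∃ f : V → ℕ, Set.InjOn f s ∧ ∀ b ∈ s, U.IsClique {a | a ∈ s ∧ U.Adj a b ∧ f a < f b} := by
  classical
  induction s using Finset.strongInduction with
  | H s ih =>
  rcases s.eq_empty_or_nonempty with rfl | ⟨u, hu⟩
  · exact ⟨0, by simp, by simp⟩
  obtain ⟨v, hvs, -, hv⟩ :=
    hU.exists_isSimplicialIn_notMem s (K := ∅) isClique_empty ⟨u, hu, Set.notMem_empty u⟩
  obtain ⟨f, hinj, hf⟩ := ih (s.erase v) (Finset.erase_ssubset hvs)
  set g := Function.update f v ((s.erase v).sup f + 1)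
  have hg : ∀ x ∈ s, x ≠ v → g x = f x ∧ g x < g v := fun x hx hxv => by
    simpa [g, hxv] using Nat.lt_succ_of_le (Finset.le_sup (Finset.mem_erase.mpr ⟨hxv, hx⟩))
  refine ⟨g, fun x hx y hy hxy => ?_, fun b hb => ?_⟩
  · by_cases hxv : x = v <;> by_cases hyv : y = v
    · exact hxv.trans hyv.symm
    · exact absurd hxy (hxv ▸ (hg y hy hyv).2.ne')
    · exact absurd hxy (hyv ▸ (hg x hx hxv).2.ne)
    · refine hinj (Finset.mem_erase.mpr ⟨hxv, hx⟩) (Finset.mem_erase.mpr ⟨hyv, hy⟩) ?_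
      rwa [← (hg x hx hxv).1, ← (hg y hy hyv).1]
  · by_cases hbv : b = v
    · subst hbv
      refine hv.subset fun a ha => ?_
      exact ⟨ha.2.1.symm, ha.1⟩
    · refine (hf b (Finset.mem_erase.mpr ⟨hbv, hb⟩)).subset fun a ha => ?_
      obtain ⟨has, hab, hlt⟩ : a ∈ s ∧ U.Adj a b ∧ g a < g b := ha
      have hav : a ≠ v := by
        rintro rfl
        exact (hg b hb hbv).2.not_gt hlt
      refine ⟨Finset.mem_erase.mpr ⟨hav, has⟩, hab, ?_⟩
      rwa [← (hg a has hav).1, ← (hg b hb hbv).1]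

end Chordal

theorem Ultrafilter.isStrictTotalOrder_eventually {ι α : Type*} (F : Ultrafilter ι)
    (r : ι → α → α → Prop) (hr : ∀ i, IsStrictOrder α (r i))
    (htot : ∀ a b, a ≠ b → ∀ᶠ i in F, r i a b ∨ r i b a) :
    IsStrictTotalOrder α (fun a b => ∀ᶠ i in F, r i a b) where
  trichotomous a b hab hba := by
    by_contra hne
    rcases F.eventually_or.mp (htot a b hne) with h | h
    exacts [hab h, hba h]
  irrefl a h := by
    obtain ⟨i, hi⟩ := h.exists
    exact (hr i).irrefl a hi
  trans a b c hab hbc := (hab.and hbc).mono fun i h => (hr i).trans a b c h.1 h.2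

/-- If U is chordal, there exists a total order on the vertices whose
induced orientation of U has no unshielded collider. -/
theorem stmt5 {V : Type*} (U : SimpleGraph V) (hchordal : ChordalGraph U) :
    ∃ r : V → V → Prop, IsStrictTotalOrder V r ∧
      ¬ HasUnshieldedCollider U (OrderOrientation U r) := by
  classical
  choose f hinj hclique using hchordal.exists_perfectEliminationRank
  let r (s : Finset V) (a b : V) : Prop := a ∈ s ∧ b ∈ s ∧ f s a < f s b
  let F : Ultrafilter (Finset V) := .of Filter.atTop
  have hF (t : Finset V) : ∀ᶠ s in F, t ⊆ s := Ultrafilter.of_le _ (Filter.eventually_ge_atTop t)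
  have hr (s : Finset V) : IsStrictOrder V (r s) :=
    { irrefl := fun _ h => h.2.2.false
      trans := fun _ _ _ h h' => ⟨h.1, h'.2.1, h.2.2.trans h'.2.2⟩ }
  have htot (a b : V) (hab : a ≠ b) : ∀ᶠ s in F, r s a b ∨ r s b a := by
    filter_upwards [hF {a, b}] with s hs
    have ha : a ∈ s := hs (by simp)
    have hb : b ∈ s := hs (by simp)
    rcases lt_trichotomy (f s a) (f s b) with h | h | h
    exacts [Or.inl ⟨ha, hb, h⟩, absurd (hinj s ha hb h) hab, Or.inr ⟨hb, ha, h⟩]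
  refine ⟨_, F.isStrictTotalOrder_eventually r hr htot, ?_⟩
  rintro ⟨a, b, c, ⟨hab, hrab⟩, ⟨hcb, hrcb⟩, hac, hnac⟩
  obtain ⟨s, ⟨has, hbs, hfab⟩, ⟨hcs, -, hfcb⟩⟩ := (hrab.and hrcb).exists
  exact hnac (hclique s b hbs ⟨has, hab, hfab⟩ ⟨hcs, hcb, hfcb⟩ hac)
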